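/- The maximal value over policies from the root equals the maximal regularized objective over decision trees: max_π V^π(Ω) = max over DTs T of R(T); moreover, for any optimal policy π* (one maximizing V^π(Ω)), the DT T^{π*} of π* attains this maximum, i.e. R(T^{π*}) = max_T R(T). -/

import Mathlib

open Finset

/-- A branch: for each feature, either unused (`none`) or fixed to a category. -/
abbrev Branch (q : ℕ) (C : Fin q → ℕ) : Type := ∀ i : Fin q, Option (Fin (C i))

/-- States: `Sum.inl l` is the (non-terminal) branch `l`, `Sum.inr l` is its terminal state `l̄`. -/
abbrev BState (q : ℕ) (C : Fin q → ℕ) : Type := Branch q C ⊕ Branch q C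

/-- The root branch `Ω`. -/
def root (q : ℕ) (C : Fin q → ℕ) : Branch q C := fun _ => none

/-- The child of `l` obtained by fixing unused feature `i` to category `j`. -/
def child {q : ℕ} {C : Fin q → ℕ} (l : Branch q C) (i : Fin q) (j : Fin (C i)) : Branch q C :=
  Function.update l i (some j)

/-- `Children(l, i)`. -/
def childrenF {q : ℕ} {C : Fin q → ℕ} (l : Branch q C) (i : Fin q) : Finset (Branch q C) :=
  Finset.univ.image (fun j : Fin (C i) => child l i j)

/-- A policy: `act l = none` is the terminal action `ā`, `act l = some i` splits on the
unused feature `i`. -/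
structure Policy (q : ℕ) (C : Fin q → ℕ) where
  act : Branch q C → Option (Fin q)
  valid : ∀ l i, act l = some i → l i = none

/-- Transition set of the action taken by `π` at branch `l`. -/
def stepSet {q : ℕ} {C : Fin q → ℕ} (π : Policy q C) (l : Branch q C) : Finset (BState q C) :=
  match π.act l with
  | none => {Sum.inr l}
  | some i => (childrenF l i).image Sum.inl

/-- Trajectory of policy `π` from branch `l`. -/
def traj {q : ℕ} {C : Fin q → ℕ} (π : Policy q C) (l : Branch q C) : ℕ → Finset (BState q C)
  | 0 => {Sum.inl l}
  | t + 1 => (traj π l t).biUnion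
      (fun s => Sum.elim (fun lu => stepSet π lu) (fun lu => ({Sum.inr lu} : Finset (BState q C))) s)

/-- `τ_l^π`: minimal time `t ≥ 1` at which the trajectory consists of terminal states only. -/
noncomputable def tau {q : ℕ} {C : Fin q → ℕ} (π : Policy q C) (l : Branch q C) : ℕ :=
  sInf {t : ℕ | 1 ≤ t ∧ ∀ x ∈ traj π l t, x.isRight}

/-- A data point `x` is in branch `l`. -/
def inBranch {q : ℕ} {C : Fin q → ℕ} (l : Branch q C) (x : ∀ i : Fin q, Fin (C i)) : Prop :=
  ∀ (i : Fin q) (c : Fin (C i)), l i = some c → x i = c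

instance {q : ℕ} {C : Fin q → ℕ} (l : Branch q C) (x : ∀ i, Fin (C i)) :
    Decidable (inBranch l x) := by unfold inBranch; infer_instance

/-- `n(l)`: number of data points in `l`. -/
def nIn {q K : ℕ} {C : Fin q → ℕ} (D : Multiset ((∀ i : Fin q, Fin (C i)) × Fin K))
    (l : Branch q C) : ℕ :=
  (D.filter (fun p => inBranch l p.1)).card

/-- `n_k(l)`: number of data points in `l` of class `k`. -/
def nk {q K : ℕ} {C : Fin q → ℕ} (D : Multiset ((∀ i : Fin q, Fin (C i)) × Fin K))
    (l : Branch q C) (k : Fin K) : ℕ :=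
  (D.filter (fun p => inBranch l p.1 ∧ p.2 = k)).card

/-- `H(l) = (max_k n_k(l)) / n`. -/
noncomputable def Hb {q K : ℕ} {C : Fin q → ℕ} (D : Multiset ((∀ i : Fin q, Fin (C i)) × Fin K))
    (l : Branch q C) : ℝ :=
  ((Finset.univ.sup (fun k : Fin K => nk D l k) : ℕ) : ℝ) / (Multiset.card D : ℝ)

/-- Reward collected at a state of the trajectory: `H(l)` for the terminal action,
`-λ` for a split action, `0` at terminal states. -/
noncomputable def rew {q K : ℕ} {C : Fin q → ℕ}
    (D : Multiset ((∀ i : Fin q, Fin (C i)) × Fin K)) (lam : ℝ) (π : Policy q C) :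
    BState q C → ℝ
  | Sum.inl lu => match π.act lu with
      | none => Hb D lu
      | some _ => -lam
  | Sum.inr _ => 0

/-- Value `V^π(l)`. -/
noncomputable def V {q K : ℕ} {C : Fin q → ℕ}
    (D : Multiset ((∀ i : Fin q, Fin (C i)) × Fin K)) (lam : ℝ)
    (π : Policy q C) (l : Branch q C) : ℝ :=
  ∑ t ∈ Finset.range (tau π l), ∑ x ∈ traj π l t, rew D lam π x

/-- State-action value `Q^π(l, a)`. -/
noncomputable def Qv {q K : ℕ} {C : Fin q → ℕ}
    (D : Multiset ((∀ i : Fin q, Fin (C i)) × Fin K)) (lam : ℝ)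
    (π : Policy q C) (l : Branch q C) : Option (Fin q) → ℝ
  | none => Hb D l
  | some i => -lam + ∑ j : Fin (C i), V D lam π (child l i j)

/-- The available actions `A(l)`. -/
def Avail {q : ℕ} {C : Fin q → ℕ} (l : Branch q C) : Finset (Option (Fin q)) :=
  insert none ((Finset.univ.filter (fun i : Fin q => l i = none)).image some)

theorem Avail_nonempty {q : ℕ} {C : Fin q → ℕ} (l : Branch q C) : (Avail l).Nonempty :=
  ⟨none, Finset.mem_insert_self _ _⟩

/-- The sub-DT of `π` rooted in `l`: the branches whose terminal states constitute
the trajectory at time `τ_l^π`. -/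
noncomputable def subDTof {q : ℕ} {C : Fin q → ℕ} (π : Policy q C) (l : Branch q C) : Finset (Branch q C) :=
  (traj π l (tau π l)).image (Sum.elim id id)

/-- `SubDT l T m`: `T` is a sub-DT rooted in `l` obtained by `m` split operations. -/
inductive SubDT {q : ℕ} {C : Fin q → ℕ} : Branch q C → Finset (Branch q C) → ℕ → Prop
  | leaf (l : Branch q C) : SubDT l {l} 0
  | split (l : Branch q C) (T : Finset (Branch q C)) (m : ℕ) (l' : Branch q C) (i : Fin q)
      (hT : SubDT l T m) (hmem : l' ∈ T) (hnone : l' i = none) :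
      SubDT l (T.erase l' ∪ childrenF l' i) (m + 1)

/-- `H(T) = ∑_{l ∈ T} H(l)`. -/
noncomputable def HT {q K : ℕ} {C : Fin q → ℕ}
    (D : Multiset ((∀ i : Fin q, Fin (C i)) × Fin K)) (T : Finset (Branch q C)) : ℝ :=
  ∑ l ∈ T, Hb D l

/-- `splits(l)`: number of features used by branch `l`. -/
def nsplits {q : ℕ} {C : Fin q → ℕ} (l : Branch q C) : ℕ :=
  (Finset.univ.filter (fun i : Fin q => l i ≠ none)).card

/-!
A policy either stops at a branch, collecting `H(l)`, or splits it on an unused feature `i` and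
then acts independently on the children, whose trajectories are disjoint because they fix
different values of `i`. Hence `V^π(l)` and `T_l^π` obey the recursion of `R` on a tree whose root
is split first, which gives `R(T^π) = V^π(Ω)`. Conversely, any DT, in whatever order its splits
were made, is a root split followed by sub-DTs of the children; gluing policies that realise those
sub-DTs gives a policy `π` with `V^π(Ω) = R(T)`. So `R(T) ≤ V^{π*}(Ω) = R(T^{π*})` for every DT `T`.
-/

theorem Finset.biUnion_update_erase_union {ι α : Type*} [Fintype ι] [DecidableEq ι] [DecidableEq α]
    (S : ι → Finset α) {j₀ : ι} {a : α} (ha : ∀ j, a ∈ S j → j = j₀) (X : Finset α) :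
    univ.biUnion (Function.update S j₀ ((S j₀).erase a ∪ X)) = (univ.biUnion S).erase a ∪ X := by
  ext x
  simp only [mem_biUnion, mem_univ, true_and, mem_union, mem_erase, Function.update_apply]
  constructor
  · rintro ⟨j, hj⟩
    split_ifs at hj <;> grind
  · rintro (⟨hxa, j, hj⟩ | hx)
    · exact ⟨j, by split_ifs <;> grind⟩
    · exact ⟨j₀, by simp [hx]⟩

section Branches

variable {q : ℕ} {C : Fin q → ℕ}

def Refines (l' l : Branch q C) : Prop := ∀ i c, l i = some c → l' i = some c

@[refl]
lemma Refines.refl (l : Branch q C) : Refines l l := fun _ _ h => h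

lemma Refines.trans {l₁ l₂ l₃ : Branch q C} (h₁₂ : Refines l₁ l₂) (h₂₃ : Refines l₂ l₃) :
    Refines l₁ l₃ :=
  fun i c h => h₁₂ i c (h₂₃ i c h)

lemma child_apply_self (l : Branch q C) (i : Fin q) (j : Fin (C i)) : child l i j i = some j :=
  Function.update_self _ _ _

lemma child_refines {l : Branch q C} {i : Fin q} (hi : l i = none) (j : Fin (C i)) :
    Refines (child l i j) l := by
  intro i' c h
  have hne : i' ≠ i := by rintro rfl; simp [hi] at h
  rwa [child, Function.update_of_ne hne]

lemma Refines.apply_eq_of_child {a l : Branch q C} {i : Fin q} {j : Fin (C i)}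
    (h : Refines a (child l i j)) : a i = some j :=
  h i j (child_apply_self l i j)

lemma eq_of_refines_child {a l l' : Branch q C} {i : Fin q} {j j' : Fin (C i)}
    (h : Refines a (child l i j)) (h' : Refines a (child l' i j')) : j = j' :=
  Option.some_injective _ (h.apply_eq_of_child.symm.trans h'.apply_eq_of_child)

lemma childrenF_eq_biUnion (l : Branch q C) (i : Fin q) :
    childrenF l i = univ.biUnion fun j => {child l i j} := by
  ext a; simp [childrenF, eq_comm]

lemma pairwiseDisjoint_of_refines_child {α : Type*} (f : α → Branch q C) {l : Branch q C}
    {i : Fin q} {S : Fin (C i) → Finset α} (hS : ∀ j, ∀ a ∈ S j, Refines (f a) (child l i j)) :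
    (↑(univ : Finset (Fin (C i))) : Set (Fin (C i))).PairwiseDisjoint S := by
  intro j _ j' _ hne
  exact disjoint_left.2 fun a ha ha' => hne (eq_of_refines_child (hS j a ha) (hS j' a ha'))

lemma nsplits_child {l : Branch q C} {i : Fin q} (hi : l i = none) (j : Fin (C i)) :
    nsplits (child l i j) = nsplits l + 1 := by
  have hset : univ.filter (fun i' => child l i j i' ≠ none)
      = insert i (univ.filter (l · ≠ none)) := by
    ext i'
    simp only [mem_filter, mem_insert, mem_univ, true_and]
    rcases eq_or_ne i' i with rfl | hne
    · simp [child]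
    · simp [child, hne]
  rw [nsplits, hset, card_insert_of_notMem (by simp [hi]), nsplits]

lemma nsplits_lt {l : Branch q C} {i : Fin q} (hi : l i = none) : nsplits l < q := by
  have hlt : univ.filter (l · ≠ none) ⊂ univ := ssubset_univ_iff.2 fun h => by
    simpa [hi] using h.ge (mem_univ i)
  simpa [nsplits] using card_lt_card hlt

theorem child_induction {P : Branch q C → Prop}
    (step : ∀ l, (∀ i, l i = none → ∀ j, P (child l i j)) → P l) (l : Branch q C) : P l := by
  induction hn : q - nsplits l using Nat.strong_induction_on generalizing l with
  | _ n ih =>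
    refine step l fun i hi j => ih _ ?_ _ rfl
    have := nsplits_child hi j
    have := nsplits_lt hi
    omega

end Branches

section Trajectory

variable {q : ℕ} {C : Fin q → ℕ} {π : Policy q C} {l : Branch q C}

lemma traj_succ_of_act_none (h : π.act l = none) : ∀ t, traj π l (t + 1) = {Sum.inr l}
  | 0 => by simp [traj, stepSet, h]
  | t + 1 => by rw [traj, traj_succ_of_act_none h t, singleton_biUnion]; rfl

lemma traj_succ_of_act_some {i : Fin q} (h : π.act l = some i) :
    ∀ t, traj π l (t + 1) = univ.biUnion fun j => traj π (child l i j) t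
  | 0 => by
    ext s
    simp [traj, stepSet, h, childrenF, eq_comm]
  | t + 1 => by rw [traj, traj_succ_of_act_some h t, biUnion_biUnion]; rfl

lemma refines_of_mem_traj : ∀ {l : Branch q C} t, ∀ s ∈ traj π l t, Refines (s.elim id id) l
  | l, 0, s, hs => by rw [traj, mem_singleton] at hs; subst hs; rfl
  | l, t + 1, s, hs => by
    rcases h : π.act l with _ | i
    · rw [traj_succ_of_act_none h, mem_singleton] at hs; subst hs; rfl
    · rw [traj_succ_of_act_some h, mem_biUnion] at hs
      obtain ⟨j, -, hs⟩ := hs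
      exact (refines_of_mem_traj t s hs).trans (child_refines (π.valid l i h) j)

lemma isRight_of_mem_traj : ∀ {l : Branch q C} t, q - nsplits l < t → ∀ s ∈ traj π l t, s.isRight
  | l, t + 1, ht, s, hs => by
    rcases h : π.act l with _ | i
    · rw [traj_succ_of_act_none h, mem_singleton] at hs; subst hs; rfl
    · rw [traj_succ_of_act_some h, mem_biUnion] at hs
      obtain ⟨j, -, hs⟩ := hs
      have hi := π.valid l i h
      refine isRight_of_mem_traj t ?_ s hs
      have := nsplits_child hi j
      have := nsplits_lt hi
      omega

lemma traj_eq_of_forall_isRight {t : ℕ} (h : ∀ s ∈ traj π l t, s.isRight) :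
    ∀ t', t ≤ t' → traj π l t' = traj π l t := by
  refine Nat.le_induction rfl fun t' _ ih => ?_
  rw [traj, ih]
  conv_rhs => rw [← biUnion_singleton_eq_self (s := traj π l t)]
  refine biUnion_congr rfl fun s hs => ?_
  rcases s with lu | lu
  · exact absurd (h _ hs) (by simp)
  · rfl

lemma tau_le : tau π l ≤ q + 1 :=
  Nat.sInf_le ⟨by omega, isRight_of_mem_traj _ (by omega)⟩

lemma isRight_of_mem_traj_tau : ∀ s ∈ traj π l (tau π l), s.isRight :=
  (Nat.sInf_mem ⟨q + 1, by omega, isRight_of_mem_traj _ (by omega)⟩ :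
    tau π l ∈ {t | 1 ≤ t ∧ ∀ s ∈ traj π l t, s.isRight}).2

lemma traj_eq_traj_tau {N : ℕ} (hN : q + 1 ≤ N) : traj π l N = traj π l (tau π l) :=
  traj_eq_of_forall_isRight isRight_of_mem_traj_tau N (tau_le.trans hN)

end Trajectory

section Value

variable {q K : ℕ} {C : Fin q → ℕ} (D : Multiset ((∀ i : Fin q, Fin (C i)) × Fin K)) (lam : ℝ)
  {π : Policy q C} {l : Branch q C}

lemma V_eq_sum_range {N : ℕ} (hN : q + 1 ≤ N) :
    V D lam π l = ∑ t ∈ range N, ∑ s ∈ traj π l t, rew D lam π s := by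
  refine sum_subset (range_subset_range.2 (tau_le.trans hN)) fun t _ ht =>
    sum_eq_zero fun s hs => ?_
  rw [traj_eq_of_forall_isRight isRight_of_mem_traj_tau t (by simpa using ht)] at hs
  rcases s with lu | lu
  · exact absurd (isRight_of_mem_traj_tau _ hs) (by simp)
  · rfl

lemma V_of_act_none (h : π.act l = none) : V D lam π l = Hb D l := by
  rw [V_eq_sum_range D lam le_rfl, sum_range_succ']
  simp only [traj_succ_of_act_none h, sum_singleton]
  simp [traj, rew, h]

lemma V_of_act_some {i : Fin q} (h : π.act l = some i) :
    V D lam π l = -lam + ∑ j, V D lam π (child l i j) := by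
  have hstep (t : ℕ) : ∑ s ∈ traj π l (t + 1), rew D lam π s
      = ∑ j, ∑ s ∈ traj π (child l i j) t, rew D lam π s := by
    rw [traj_succ_of_act_some h, sum_biUnion (pairwiseDisjoint_of_refines_child
      (fun s : BState q C => s.elim id id) fun j => refines_of_mem_traj t)]
  rw [V_eq_sum_range D lam (N := q + 1 + 1) (by omega), sum_range_succ',
    sum_congr rfl fun t _ => hstep t, sum_comm, add_comm]
  simp [traj, rew, h, V_eq_sum_range D lam (le_refl (q + 1))]

lemma subDTof_eq_image {N : ℕ} (hN : q + 1 ≤ N) :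
    subDTof π l = (traj π l N).image (Sum.elim id id) := by
  rw [subDTof, traj_eq_traj_tau hN]

lemma subDTof_of_act_none (h : π.act l = none) : subDTof π l = {l} := by
  simp [subDTof_eq_image le_rfl, traj_succ_of_act_none h]

lemma subDTof_of_act_some {i : Fin q} (h : π.act l = some i) :
    subDTof π l = univ.biUnion fun j => subDTof π (child l i j) := by
  rw [subDTof_eq_image (N := q + 1 + 1) (by omega), traj_succ_of_act_some h, biUnion_image]
  simp only [subDTof_eq_image le_rfl]

lemma refines_of_mem_subDTof : ∀ a ∈ subDTof π l, Refines a l := by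
  intro a ha
  obtain ⟨s, hs, rfl⟩ := mem_image.1 ha
  exact refines_of_mem_traj _ s hs

lemma V_congr {π₁ π₂ : Policy q C} :
    ∀ l : Branch q C, (∀ lu, Refines lu l → π₁.act lu = π₂.act lu) →
      V D lam π₁ l = V D lam π₂ l := by
  refine child_induction fun l ih hagree => ?_
  have hl := hagree l (.refl l)
  rcases h₁ : π₁.act l with _ | i
  · rw [V_of_act_none D lam h₁, V_of_act_none D lam (hl ▸ h₁)]
  · have hi := π₁.valid l i h₁
    rw [V_of_act_some D lam h₁, V_of_act_some D lam (hl ▸ h₁)]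
    congr 1
    exact sum_congr rfl fun j _ =>
      ih i hi j fun lu hlu => hagree lu (hlu.trans (child_refines hi j))

end Value

section SubDT

variable {q : ℕ} {C : Fin q → ℕ}

lemma SubDT.refines {l : Branch q C} {T : Finset (Branch q C)} {m : ℕ} (h : SubDT l T m) :
    ∀ a ∈ T, Refines a l := by
  induction h with
  | leaf => simp only [mem_singleton, forall_eq]; rfl
  | split T m l' i _ hmem hnone ih =>
    intro a ha
    rcases mem_union.1 ha with ha | ha
    · exact ih a (mem_of_mem_erase ha)
    · obtain ⟨j, -, rfl⟩ := mem_image.1 ha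
      exact (child_refines hnone j).trans (ih l' hmem)

lemma SubDT.glue {l l' : Branch q C} {T T' : Finset (Branch q C)} {m m' : ℕ}
    (hT : SubDT l T m) (hl' : l' ∈ T) (honly : ∀ a ∈ T, Refines a l' → a = l')
    (hT' : SubDT l' T' m') : SubDT l (T.erase l' ∪ T') (m + m') := by
  induction hT' with
  | leaf => rwa [union_comm, ← insert_eq, insert_erase hl']
  | split T₀ m₀ l₀ i hT₀ hmem hnone ih =>
    have hl₀ : l₀ ∉ T.erase l' := fun h =>
      (mem_erase.1 h).1 (honly l₀ (mem_of_mem_erase h) (hT₀.refines l₀ hmem))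
    have := SubDT.split l _ _ l₀ i ih (mem_union_right _ hmem) hnone
    rwa [erase_union_distrib, erase_eq_of_notMem hl₀, union_assoc] at this

lemma SubDT.biUnion_children {l : Branch q C} {i : Fin q} (hi : l i = none)
    {Tc : Fin (C i) → Finset (Branch q C)} {mc : Fin (C i) → ℕ}
    (hTc : ∀ j, SubDT (child l i j) (Tc j) (mc j)) :
    SubDT l (univ.biUnion Tc) (1 + ∑ j, mc j) := by
  -- `G s`: the children indexed by `s` already expanded into their sub-DTs
  let G (s : Finset (Fin (C i))) (j : Fin (C i)) : Finset (Branch q C) :=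
    if j ∈ s then Tc j else {child l i j}
  have hG (s j) : ∀ a ∈ G s j, Refines a (child l i j) := by
    intro a ha
    by_cases hj : j ∈ s
    · exact (hTc j).refines a (by simpa [G, hj] using ha)
    · rw [show a = child l i j by simpa [G, hj] using ha]
  suffices ∀ s, SubDT l (univ.biUnion (G s)) (1 + ∑ j ∈ s, mc j) by simpa [G] using this univ
  intro s
  induction s using Finset.induction with
  | empty =>
    simpa [G, childrenF_eq_biUnion] using
      SubDT.split l {l} 0 l i (.leaf l) (mem_singleton_self l) hi
  | @insert j s hj ih =>
    have hmem : child l i j ∈ univ.biUnion (G s) := mem_biUnion.2 ⟨j, mem_univ j, by simp [G, hj]⟩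
    have honly (a) (ha : a ∈ univ.biUnion (G s)) (hrefines : Refines a (child l i j)) :
        a = child l i j := by
      obtain ⟨j', -, ha⟩ := mem_biUnion.1 ha
      obtain rfl := eq_of_refines_child (hG s j' a ha) hrefines
      simpa [G, hj] using ha
    have hupdate :
        G (insert j s) = Function.update (G s) j ((G s j).erase (child l i j) ∪ Tc j) := by
      ext1 j'
      rcases eq_or_ne j' j with rfl | hne
      · simp [G, hj]
      · simp [G, hne]
    rw [hupdate, biUnion_update_erase_union _
        (fun j' h => eq_of_refines_child (hG s j' _ h) (.refl _)),
      sum_insert hj, add_comm (mc j), ← add_assoc]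
    exact ih.glue hmem honly (hTc j)

lemma SubDT.eq_singleton_or_biUnion_children {l : Branch q C} {T : Finset (Branch q C)} {m : ℕ}
    (h : SubDT l T m) :
    (T = {l} ∧ m = 0) ∨
      ∃ i, l i = none ∧ ∃ (Tc : Fin (C i) → Finset (Branch q C)) (mc : Fin (C i) → ℕ),
        (∀ j, SubDT (child l i j) (Tc j) (mc j)) ∧ T = univ.biUnion Tc ∧ m = 1 + ∑ j, mc j := by
  induction h with
  | leaf => exact .inl ⟨rfl, rfl⟩
  | split T m l' i' _ hmem hnone ih =>
    rcases ih with ⟨rfl, rfl⟩ | ⟨i, hi, Tc, mc, hTc, rfl, rfl⟩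
    · obtain rfl := mem_singleton.1 hmem
      refine .inr ⟨i', hnone, fun j => {child l' i' j}, fun _ => 0, fun j => .leaf _, ?_, by simp⟩
      rw [erase_singleton, empty_union, childrenF_eq_biUnion]
    · obtain ⟨j₀, -, hj₀⟩ := mem_biUnion.1 hmem
      have honly (j) (hj : l' ∈ Tc j) : j = j₀ :=
        eq_of_refines_child ((hTc j).refines l' hj) ((hTc j₀).refines l' hj₀)
      refine .inr ⟨i, hi, Function.update Tc j₀ ((Tc j₀).erase l' ∪ childrenF l' i'),
        Function.update mc j₀ (mc j₀ + 1), fun j => ?_,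
        (biUnion_update_erase_union Tc honly _).symm, ?_⟩
      · rcases eq_or_ne j j₀ with rfl | hne
        · simpa using SubDT.split _ _ _ l' i' (hTc j) hj₀ hnone
        · simpa [hne] using hTc j
      · rw [sum_update_of_mem (mem_univ j₀), sum_eq_add_sum_sdiff_singleton_of_mem (mem_univ j₀) mc]
        omega

end SubDT

section Policies

variable {q : ℕ} {C : Fin q → ℕ}

def Policy.terminal : Policy q C := ⟨fun _ => none, fun _ _ h => nomatch h⟩

def Policy.node (l : Branch q C) (i : Fin q) (hi : l i = none) (πc : Fin (C i) → Policy q C) :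
    Policy q C where
  act lu := match lu i with
    | some j => (πc j).act lu
    | none => if lu = l then some i else none
  valid lu i' h := by
    split at h
    · exact (πc _).valid lu i' h
    · split_ifs at h with hlu
      cases h
      rwa [hlu]

variable {l : Branch q C} {i : Fin q} {hi : l i = none} {πc : Fin (C i) → Policy q C}

lemma Policy.node_act_self : (Policy.node l i hi πc).act l = some i := by
  simp [Policy.node, hi]

lemma Policy.node_act_of_refines {lu : Branch q C} {j : Fin (C i)} (h : Refines lu (child l i j)) :
    (Policy.node l i hi πc).act lu = (πc j).act lu := by
  simp [Policy.node, h.apply_eq_of_child]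

end Policies

section Objective

variable {q K : ℕ} {C : Fin q → ℕ} (D : Multiset ((∀ i : Fin q, Fin (C i)) × Fin K)) (lam : ℝ)

lemma HT_biUnion_children {l : Branch q C} {i : Fin q} {Tc : Fin (C i) → Finset (Branch q C)}
    (h : ∀ j, ∀ a ∈ Tc j, Refines a (child l i j)) : HT D (univ.biUnion Tc) = ∑ j, HT D (Tc j) :=
  sum_biUnion (pairwiseDisjoint_of_refines_child id h)

lemma neg_mul_one_add_sum_add_sum {ι : Type*} (s : Finset ι) (m : ι → ℕ) (h : ι → ℝ) :
    -lam * ((1 + ∑ j ∈ s, m j : ℕ) : ℝ) + ∑ j ∈ s, h j = -lam + ∑ j ∈ s, (-lam * m j + h j) := by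
  push_cast
  rw [sum_add_distrib, ← mul_sum]
  ring

theorem exists_subDT_subDTof (π : Policy q C) :
    ∀ l : Branch q C, ∃ m, SubDT l (subDTof π l) m ∧
      -lam * m + HT D (subDTof π l) = V D lam π l := by
  refine child_induction fun l ih => ?_
  rcases h : π.act l with _ | i
  · rw [subDTof_of_act_none h, V_of_act_none D lam h]
    exact ⟨0, .leaf l, by simp [HT]⟩
  · have hi := π.valid l i h
    choose mc hmc hval using ih i hi
    refine ⟨1 + ∑ j, mc j, ?_, ?_⟩
    · rw [subDTof_of_act_some h]
      exact SubDT.biUnion_children hi hmc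
    · rw [subDTof_of_act_some h, V_of_act_some D lam h,
        HT_biUnion_children D fun j => refines_of_mem_subDTof, neg_mul_one_add_sum_add_sum]
      simp only [hval]

theorem exists_policy_V_eq {l : Branch q C} {T : Finset (Branch q C)} {m : ℕ} (h : SubDT l T m) :
    ∃ π : Policy q C, V D lam π l = -lam * m + HT D T := by
  induction m using Nat.strong_induction_on generalizing l T with
  | _ m ih =>
    rcases h.eq_singleton_or_biUnion_children with ⟨rfl, rfl⟩ | ⟨i, hi, Tc, mc, hTc, rfl, rfl⟩
    · exact ⟨.terminal, by simp [V_of_act_none D lam (rfl : Policy.terminal.act l = none), HT]⟩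
    · have hlt (j) : mc j < 1 + ∑ j, mc j :=
        Nat.lt_one_add_iff.2 (single_le_sum (fun _ _ => Nat.zero_le _) (mem_univ j))
      choose πc hπc using fun j => ih _ (hlt j) (hTc j)
      refine ⟨.node l i hi πc, ?_⟩
      have hVc (j) : V D lam (.node l i hi πc) (child l i j) = -lam * mc j + HT D (Tc j) :=
        (V_congr D lam _ fun _ hlu => Policy.node_act_of_refines hlu).trans (hπc j)
      rw [V_of_act_some D lam Policy.node_act_self, sum_congr rfl fun j _ => hVc j,
        HT_biUnion_children D fun j => (hTc j).refines, neg_mul_one_add_sum_add_sum]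

end Objective

theorem optimal_policy_yields_optimal_tree_general {q K : ℕ} {C : Fin q → ℕ}
    (D : Multiset ((∀ i : Fin q, Fin (C i)) × Fin K)) (lam : ℝ) (πs : Policy q C)
    (hopt : ∀ π : Policy q C, V D lam π (root q C) ≤ V D lam πs (root q C)) :
    ∃ m : ℕ, SubDT (root q C) (subDTof πs (root q C)) m ∧
      -lam * m + HT D (subDTof πs (root q C)) = V D lam πs (root q C) ∧
      ∀ (T : Finset (Branch q C)) (m' : ℕ), SubDT (root q C) T m' →
        -lam * m' + HT D T ≤ -lam * m + HT D (subDTof πs (root q C)) := by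
  obtain ⟨m, hsub, hval⟩ := exists_subDT_subDTof D lam πs (root q C)
  refine ⟨m, hsub, hval, fun T m' hT => ?_⟩
  obtain ⟨π, hπ⟩ := exists_policy_V_eq D lam hT
  rw [hval, ← hπ]
  exact hopt π

/-- `max_π V^π(Ω) = max_T R(T)`, attained by the DT of an optimal
policy: for an optimal policy `πs`, the DT `T^{πs}` is a DT whose regularized
objective equals `V^{πs}(Ω)` and dominates every other DT. -/
theorem optimal_policy_yields_optimal_tree {q K : ℕ} (hq : 2 ≤ q) (hK : 2 ≤ K)
    {C : Fin q → ℕ} (hC : ∀ i, 2 ≤ C i)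
    (D : Multiset ((∀ i : Fin q, Fin (C i)) × Fin K)) (hD : D ≠ 0)
    (lam : ℝ) (hlam0 : 0 < lam) (hlam1 : lam < 1)
    (πs : Policy q C)
    (hopt : ∀ π : Policy q C, V D lam π (root q C) ≤ V D lam πs (root q C)) :
    ∃ m : ℕ, SubDT (root q C) (subDTof πs (root q C)) m ∧
      -lam * m + HT D (subDTof πs (root q C)) = V D lam πs (root q C) ∧
      ∀ (T : Finset (Branch q C)) (m' : ℕ), SubDT (root q C) T m' →
        -lam * m' + HT D T ≤ -lam * m + HT D (subDTof πs (root q C)) :=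
  optimal_policy_yields_optimal_tree_general D lam πs hopt
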